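/- arXiv:0811.0547 — 2 statements merged into one kernel-verified Lean document; each statement's English description precedes it below -/
import Mathlib

section
/- Let M be a complete connected Riemannian manifold and G a subgroup of I(M) all of whose orbits in M are closed. Then for every p ∈ M, the orbit G·p equals the orbit Ḡ·p of the closure Ḡ of G in I(M). -/
open Filter Topology Metric Bornology

/-- Compact-open topology on the isometry group `I(M) = M ≃ᵢ M`. -/
noncomputable instance isomCO {M : Type*} [MetricSpace M] : TopologicalSpace (M ≃ᵢ M) :=
  TopologicalSpace.induced (fun g => (⟨g, g.continuous⟩ : C(M, M))) ContinuousMap.compactOpen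

theorem Set.image_closure_eq_of_isClosed_image {X Y : Type*} [TopologicalSpace X]
    [TopologicalSpace Y] {f : X → Y} (hf : Continuous f) {s : Set X}
    (hs : IsClosed (f '' s)) : f '' closure s = f '' s :=
  ((image_closure_subset_closure_image hf).trans hs.closure_subset).antisymm
    (Set.image_mono subset_closure)

theorem IsometryEquiv.continuous_apply {M : Type*} [MetricSpace M] (p : M) :
    Continuous fun g : M ≃ᵢ M => g p :=
  (ContinuousEvalConst.continuous_eval_const (F := C(M, M)) p).comp
    (continuous_induced_dom (f := fun g : M ≃ᵢ M => (⟨g, g.continuous⟩ : C(M, M))))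

theorem closed_orbits_eq_closure_orbits_general {M : Type*} [MetricSpace M] (G : Subgroup (M ≃ᵢ M))
    (hcl : ∀ p : M, IsClosed ((fun g : M ≃ᵢ M => g p) '' (G : Set (M ≃ᵢ M)))) :
    ∀ p : M, (fun g : M ≃ᵢ M => g p) '' (G : Set (M ≃ᵢ M)) =
      (fun g : M ≃ᵢ M => g p) '' closure (G : Set (M ≃ᵢ M)) := fun p =>
  (Set.image_closure_eq_of_isClosed_image (IsometryEquiv.continuous_apply p) (hcl p)).symm

theorem closed_orbits_eq_closure_orbits {M : Type*} [MetricSpace M] [ProperSpace M]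
    [ConnectedSpace M] (G : Subgroup (M ≃ᵢ M))
    (hcl : ∀ p : M, IsClosed ((fun g : M ≃ᵢ M => g p) '' (G : Set (M ≃ᵢ M)))) :
    ∀ p : M, (fun g : M ≃ᵢ M => g p) '' (G : Set (M ≃ᵢ M)) =
      (fun g : M ≃ᵢ M => g p) '' closure (G : Set (M ≃ᵢ M)) :=
  closed_orbits_eq_closure_orbits_general G hcl
end

section
/- Let M be a complete connected Riemannian manifold and G a subgroup of I(M). The orbits of G are all closed in M if and only if for every p ∈ M the G-orbit of p coincides with the orbit of p under the closure of G in I(M). -/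
open Filter Topology Metric Bornology

/-!
In a proper metric space the evaluation map `g ↦ g p` on the isometry group is a proper map.
Indeed, if `g p` converges along an ultrafilter, then every orbit point `g x` stays in a closed
ball, hence converges; the same holds for `g⁻¹ x`, since `g⁻¹ q → p`. The two pointwise limits
are mutually inverse isometries, and since isometries are equicontinuous, pointwise convergence
is compact-open convergence. A proper map is closed, so for `G ≤ I(M)` the closure of the orbit
`G · p` is `closure G · p`, and the theorem follows.
-/

namespace IsometryEquiv

variable {M ι : Type*} [MetricSpace M]

theorem continuous_eval_const (p : M) : Continuous fun g : M ≃ᵢ M => g p :=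
  (ContinuousEvalConst.continuous_eval_const (F := C(M, M)) p).comp
    (continuous_induced_dom (f := fun g : M ≃ᵢ M => (⟨g, g.continuous⟩ : C(M, M))))

theorem tendsto_nhds_of_tendsto_apply {l : Filter ι} {F : ι → M ≃ᵢ M} {e : M ≃ᵢ M}
    (h : ∀ x, Tendsto (fun i => F i x) l (𝓝 (e x))) : Tendsto F l (𝓝 e) := by
  rw [nhds_induced, tendsto_comap_iff, ContinuousMap.isUniformEmbedding_toUniformOnFunIsCompact
    |>.isUniformInducing.isInducing.tendsto_nhds_iff]
  have hequi : ∀ K ∈ {K : Set M | IsCompact K}, EquicontinuousOn (fun i => ⇑(F i)) K :=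
    fun K _ => (LipschitzWith.uniformEquicontinuous _ 1 fun i => (F i).isometry.lipschitz)
      |>.equicontinuous.equicontinuousOn K
  exact (EquicontinuousOn.tendsto_uniformOnFun_iff_pi (fun _ hK => hK)
    (Set.sUnion_eq_univ_iff.2 fun x => ⟨{x}, isCompact_singleton, rfl⟩) hequi l e).2
    (tendsto_pi_nhds.2 h)

theorem tendsto_symm_apply_of_tendsto_apply {l : Filter ι} {F : ι → M ≃ᵢ M} {p q : M}
    (h : Tendsto (fun i => F i p) l (𝓝 q)) : Tendsto (fun i => (F i).symm q) l (𝓝 p) := by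
  rw [tendsto_iff_dist_tendsto_zero] at h ⊢
  refine h.congr fun i => ?_
  rw [dist_comm, ← (F i).symm.dist_eq, symm_apply_apply]

theorem exists_tendsto_apply_of_tendsto_apply [ProperSpace M] (U : Ultrafilter ι)
    (F : ι → M ≃ᵢ M) {p q : M} (h : Tendsto (fun i => F i p) U (𝓝 q)) (x : M) :
    ∃ y, Tendsto (fun i => F i x) U (𝓝 y) := by
  have hball : ∀ᶠ i in (U : Filter ι), F i x ∈ closedBall q (dist x p + 1) := by
    filter_upwards [h (ball_mem_nhds q one_pos)] with i hi
    calc dist (F i x) q ≤ dist (F i x) (F i p) + dist (F i p) q := dist_triangle _ _ _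
      _ ≤ dist x p + 1 := by rw [(F i).dist_eq]; gcongr; exact (mem_ball.1 hi).le
  obtain ⟨y, -, hy⟩ := (isCompact_closedBall q _).ultrafilter_le_nhds (U.map fun i => F i x)
    (le_principal_iff.2 hball)
  exact ⟨y, hy⟩

theorem exists_tendsto_apply_of_forall_tendsto {l : Filter ι} [l.NeBot] {F : ι → M ≃ᵢ M}
    {f g : M → M} (hf : ∀ x, Tendsto (fun i => F i x) l (𝓝 (f x)))
    (hg : ∀ x, Tendsto (fun i => (F i).symm x) l (𝓝 (g x))) :
    ∃ e : M ≃ᵢ M, ∀ x, Tendsto (fun i => F i x) l (𝓝 (e x)) := by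
  have hf_isometry : Isometry f := Isometry.of_dist_eq fun x y =>
    tendsto_nhds_unique ((hf x).dist (hf y)) <| by
      simp only [IsometryEquiv.dist_eq, tendsto_const_nhds]
  -- `F i (g x)` is as close to `x = F i ((F i).symm x)` as `g x` is to `(F i).symm x`
  have hfg : ∀ x, f (g x) = x := fun x => by
    refine tendsto_nhds_unique (hf (g x)) (tendsto_iff_dist_tendsto_zero.2 ?_)
    refine (tendsto_iff_dist_tendsto_zero.1 (hg x)).congr fun i => ?_
    rw [dist_comm, ← (F i).dist_eq, apply_symm_apply]
  exact ⟨mk' f g hfg hf_isometry, hf⟩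

theorem isProperMap_eval_const [ProperSpace M] (p : M) : IsProperMap fun g : M ≃ᵢ M => g p := by
  refine isProperMap_iff_ultrafilter_of_t2.2 ⟨continuous_eval_const p, fun U q hq => ?_⟩
  choose f hf using exists_tendsto_apply_of_tendsto_apply U (fun g => g) hq
  choose g hg using exists_tendsto_apply_of_tendsto_apply U (fun g => g.symm)
    (tendsto_symm_apply_of_tendsto_apply hq)
  obtain ⟨e, he⟩ := exists_tendsto_apply_of_forall_tendsto hf hg
  exact ⟨e, tendsto_nhds_of_tendsto_apply he⟩

end IsometryEquiv

theorem closed_orbits_iff_closure_orbit_equivalent_general {M : Type*} [MetricSpace M] [ProperSpace M]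
    (G : Subgroup (M ≃ᵢ M)) :
    (∀ p : M, IsClosed ((fun g : M ≃ᵢ M => g p) '' (G : Set (M ≃ᵢ M)))) ↔
      ∀ p : M, (fun g : M ≃ᵢ M => g p) '' (G : Set (M ≃ᵢ M)) =
        (fun g : M ≃ᵢ M => g p) '' closure (G : Set (M ≃ᵢ M)) := by
  refine forall_congr' fun p => ?_
  have hproper := IsometryEquiv.isProperMap_eval_const (M := M) p
  rw [← hproper.isClosedMap.closure_image_eq_of_continuous hproper.continuous, eq_comm,
    closure_eq_iff_isClosed]

theorem closed_orbits_iff_closure_orbit_equivalent {M : Type*} [MetricSpace M] [ProperSpace M]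
    [ConnectedSpace M] (G : Subgroup (M ≃ᵢ M)) :
    (∀ p : M, IsClosed ((fun g : M ≃ᵢ M => g p) '' (G : Set (M ≃ᵢ M)))) ↔
      ∀ p : M, (fun g : M ≃ᵢ M => g p) '' (G : Set (M ≃ᵢ M)) =
        (fun g : M ≃ᵢ M => g p) '' closure (G : Set (M ≃ᵢ M)) :=
  closed_orbits_iff_closure_orbit_equivalent_general G
end
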